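/- The shifted function F^L(x) − 2^{−2L−2} satisfies 0 ≤ x² − (F^L(x) − 2^{−2L−2}) ≤ 2^{−2L−2} for all x ∈ [0,1], and equality x² = F^L(x) − 2^{−2L−2} holds if and only if x = i/2^L + 1/2^{L+1} for some i ∈ {0, 1, …, 2^L − 1}. -/

import Mathlib

/-- The tooth function `G(x) = min (2x) (2(1-x))`. -/
noncomputable def sawG (x : ℝ) : ℝ := min (2 * x) (2 * (1 - x))

/-- The sawtooth approximation `F^L(x) = x - ∑_{j=1}^L 2^{-2j} G^j(x)`. -/
noncomputable def sawF (L : ℕ) (x : ℝ) : ℝ :=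
  x - ∑ j ∈ Finset.Icc 1 L, (2 : ℝ) ^ (-(2 * (j : ℤ))) * sawG^[j] x

/-!
Since `x (1 - x) - G(x)/4 = G(x) (1 - G(x)) / 4` for every real `x`, induction on `L` gives
`F^L(x) - x² = 4^{-L} G^L(x) (1 - G^L(x))`, that is
`x² - (F^L(x) - 4^{-L-1}) = 4^{-L} (G^L(x) - 1/2)²`.
This lies between `0` and `4^{-L-1}` because `G` maps `[0,1]` into itself, and it vanishes exactly
when `G^L(x) = 1/2`. As the `G`-preimages of `y ≤ 1` are `y/2` and `1 - y/2`, the solutions of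
`G^L(x) = 1/2` are the midpoints `(2i+1)/2^{L+1}` of the dyadic intervals of level `L`.
-/

open Set

lemma sawG_of_le_half {x : ℝ} (h : x ≤ 1 / 2) : sawG x = 2 * x :=
  min_eq_left (by linarith)

lemma sawG_of_half_le {x : ℝ} (h : 1 / 2 ≤ x) : sawG x = 2 * (1 - x) :=
  min_eq_right (by linarith)

lemma sawG_mapsTo : MapsTo sawG (Icc 0 1) (Icc 0 1) := by
  rintro x ⟨h0, h1⟩
  rcases le_total x (1 / 2) with h | h
  · rw [sawG_of_le_half h]; constructor <;> linarith
  · rw [sawG_of_half_le h]; constructor <;> linarith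

lemma sawG_mul_one_sub_sawG (x : ℝ) : sawG x * (1 - sawG x) / 4 = x * (1 - x) - sawG x / 4 := by
  rcases le_total x (1 / 2) with h | h
  · rw [sawG_of_le_half h]; ring
  · rw [sawG_of_half_le h]; ring

lemma sawG_eq_iff {x y : ℝ} (hy : y ≤ 1) : sawG x = y ↔ x = y / 2 ∨ x = 1 - y / 2 := by
  constructor
  · intro hxy
    rcases le_total x (1 / 2) with h | h
    · rw [sawG_of_le_half h] at hxy; left; linarith
    · rw [sawG_of_half_le h] at hxy; right; linarith
  · rintro (rfl | rfl)
    · rw [sawG_of_le_half (by linarith)]; ring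
    · rw [sawG_of_half_le (by linarith)]; ring

lemma two_zpow_neg_two_mul (n : ℕ) : (2 : ℝ) ^ (-(2 * (n : ℤ))) = (1 / 4) ^ n := by
  rw [neg_mul_eq_neg_mul, zpow_mul, zpow_natCast]
  norm_num

lemma two_zpow_neg_two_mul_sub_two (n : ℕ) :
    (2 : ℝ) ^ (-(2 * (n : ℤ)) - 2) = (1 / 4) ^ n / 4 := by
  rw [zpow_sub₀ two_ne_zero, two_zpow_neg_two_mul]
  norm_num

lemma sawF_succ (L : ℕ) (x : ℝ) :
    sawF (L + 1) x = sawF L x - (1 / 4) ^ (L + 1) * sawG^[L + 1] x := by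
  rw [sawF, sawF, Finset.sum_Icc_succ_top (by omega), ← two_zpow_neg_two_mul]
  push_cast
  ring

lemma sawF_sub_sq (L : ℕ) (x : ℝ) :
    sawF L x - x ^ 2 = (1 / 4) ^ L * (sawG^[L] x * (1 - sawG^[L] x)) := by
  induction L with
  | zero =>
    simp only [sawF, Finset.Icc_eq_empty_of_lt zero_lt_one, Finset.sum_empty,
      Function.iterate_zero_apply]
    ring
  | succ L ih =>
    have step := sawG_mul_one_sub_sawG (sawG^[L] x)
    rw [sawF_succ, Function.iterate_succ_apply']
    linear_combination ih - (1 / 4) ^ L * step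

lemma sq_sub_sawF_sub_eq (L : ℕ) (x : ℝ) :
    x ^ 2 - (sawF L x - (2 : ℝ) ^ (-(2 * (L : ℤ)) - 2)) =
      (1 / 4) ^ L * (sawG^[L] x - 1 / 2) ^ 2 := by
  rw [two_zpow_neg_two_mul_sub_two]
  linear_combination -sawF_sub_sq L x

noncomputable def dyadicMidpoint (L i : ℕ) : ℝ := (i : ℝ) / 2 ^ L + 1 / 2 ^ (L + 1)

lemma dyadicMidpoint_le_one {L i : ℕ} (hi : i < 2 ^ L) : dyadicMidpoint L i ≤ 1 := by
  have hi' : (i : ℝ) + 1 ≤ 2 ^ L := by exact_mod_cast hi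
  rw [dyadicMidpoint, pow_succ, div_add_div _ _ (by positivity) (by positivity),
    div_le_one (by positivity)]
  nlinarith [pow_pos (two_pos : (0 : ℝ) < 2) L]

lemma dyadicMidpoint_succ (L i : ℕ) : dyadicMidpoint (L + 1) i = dyadicMidpoint L i / 2 := by
  simp only [dyadicMidpoint, pow_succ]
  ring

lemma dyadicMidpoint_reflect {L i : ℕ} (hi : i < 2 ^ L) :
    dyadicMidpoint L (2 ^ L - 1 - i) = 1 - dyadicMidpoint L i := by
  rw [dyadicMidpoint, dyadicMidpoint, Nat.sub_sub, Nat.cast_sub (by omega)]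
  push_cast
  field_simp
  ring

lemma exists_dyadicMidpoint_succ_iff (L : ℕ) (x : ℝ) :
    (∃ j < 2 ^ (L + 1), x = dyadicMidpoint (L + 1) j) ↔
      ∃ i < 2 ^ L, x = dyadicMidpoint L i / 2 ∨ x = 1 - dyadicMidpoint L i / 2 := by
  have hpow : 2 ^ (L + 1) = 2 * 2 ^ L := pow_succ' 2 L
  constructor
  · rintro ⟨j, hj, rfl⟩
    rcases lt_or_ge j (2 ^ L) with hjL | hjL
    · exact ⟨j, hjL, .inl (dyadicMidpoint_succ L j)⟩
    · refine ⟨2 ^ (L + 1) - 1 - j, by omega, .inr ?_⟩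
      rw [← dyadicMidpoint_succ, ← dyadicMidpoint_reflect (by omega)]
      congr 1
      omega
  · rintro ⟨i, hi, rfl | rfl⟩
    · exact ⟨i, by omega, (dyadicMidpoint_succ L i).symm⟩
    · refine ⟨2 ^ (L + 1) - 1 - i, by omega, ?_⟩
      rw [dyadicMidpoint_reflect (by omega), dyadicMidpoint_succ]

lemma sawG_iterate_eq_half_iff (L : ℕ) (x : ℝ) :
    sawG^[L] x = 1 / 2 ↔ ∃ i < 2 ^ L, x = dyadicMidpoint L i := by
  induction L generalizing x with
  | zero => simp [dyadicMidpoint]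
  | succ L ih =>
    rw [Function.iterate_succ_apply, ih, exists_dyadicMidpoint_succ_iff]
    refine exists_congr fun i => and_congr_right fun hi => ?_
    exact sawG_eq_iff (dyadicMidpoint_le_one hi)

/-- The shifted function `F^L(x) - 2^{-2L-2}` satisfies
`0 ≤ x² - (F^L(x) - 2^{-2L-2}) ≤ 2^{-2L-2}` on `[0,1]`, with equality
`x² = F^L(x) - 2^{-2L-2}` if and only if `x = i/2^L + 1/2^{L+1}` for some
`i ∈ {0, …, 2^L - 1}`. -/
theorem sawF_shifted (L : ℕ) (x : ℝ) (hx : x ∈ Set.Icc (0 : ℝ) 1) :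
    (0 ≤ x ^ 2 - (sawF L x - (2 : ℝ) ^ (-(2 * (L : ℤ)) - 2)) ∧
      x ^ 2 - (sawF L x - (2 : ℝ) ^ (-(2 * (L : ℤ)) - 2)) ≤
        (2 : ℝ) ^ (-(2 * (L : ℤ)) - 2)) ∧
    (x ^ 2 = sawF L x - (2 : ℝ) ^ (-(2 * (L : ℤ)) - 2) ↔
      ∃ i : ℕ, i < 2 ^ L ∧ x = (i : ℝ) / 2 ^ L + 1 / 2 ^ (L + 1)) := by
  obtain ⟨hu0, hu1⟩ := (sawG_mapsTo.iterate L) hx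
  refine ⟨⟨?_, ?_⟩, ?_⟩
  · rw [sq_sub_sawF_sub_eq]; positivity
  · rw [sq_sub_sawF_sub_eq, two_zpow_neg_two_mul_sub_two]
    calc (1 / 4 : ℝ) ^ L * (sawG^[L] x - 1 / 2) ^ 2 ≤ (1 / 4) ^ L * (1 / 4) := by
          gcongr; nlinarith
      _ = (1 / 4) ^ L / 4 := by ring
  · rw [← sub_eq_zero, sq_sub_sawF_sub_eq, mul_eq_zero, pow_eq_zero_iff two_ne_zero, sub_eq_zero,
      sawG_iterate_eq_half_iff]
    simp [dyadicMidpoint]
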